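/- arXiv:1708.02128 — 4 statements merged into one kernel-verified Lean document; each statement's English description precedes it below -/
import Mathlib

section
/- Let π : X̃ → X be a surjective finite-fold covering map between compact Hausdorff spaces with X̃ connected, and suppose the covering is regular, i.e. the group G of deck transformations of π acts transitively on each fiber of π. Then there exist a finite index set I, nonnegative continuous functions ẽ_ι : X̃ → ℝ (ι ∈ I), and open subsets Ũ_ι ⊆ X̃ on which π is injective with the support of ẽ_ι contained in Ũ_ι, such that (1) ∑_{ι∈I} ∑_{g∈G} (ẽ_ι ∘ g)² = 1 identically on X̃, and (2) ẽ_ι · (ẽ_ι ∘ g) = 0 for every ι ∈ I and every deck transformation g ≠ id. -/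
/-!
Cover `X` by finitely many evenly covered open sets `U k` and pick one sheet `V k` over each
(an open subset of `π ⁻¹' U k` that is also closed in it and meets every nonempty fiber over
`U k` exactly once). For a partition of unity `ρ` on `X` subordinate to the `U k`, let `e k` be
`√(ρ k ∘ π)` on `V k` and `0` elsewhere; it is continuous because `V k` is clopen in `π ⁻¹' U k`.
Deck transformations act freely since `X̃` is connected, and transitively on fibers by regularity,
so for each `z` exactly one deck transformation moves `z` into `V k` whenever `ρ k (π z) ≠ 0`.
Hence `∑_g (e k ∘ g)² = ρ k ∘ π`, summing to `1` over `k`, and `e k · (e k ∘ g)` vanishes for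
`g ≠ id`.
-/

open Set Function

variable {E X : Type*} [TopologicalSpace E] [TopologicalSpace X] {π : E → X}

structure IsSheet (π : E → X) (U : Set X) (V : Set E) : Prop where
  isOpen : IsOpen V
  isOpen_preimage_diff : IsOpen (π ⁻¹' U \ V)
  subset_preimage : V ⊆ π ⁻¹' U
  injOn : InjOn π V
  exists_mem_fiber : ∀ z ∈ π ⁻¹' U, ∃ v ∈ V, π v = π z

theorem Bundle.Trivialization.isSheet {I : Type*} [TopologicalSpace I] [DiscreteTopology I]
    (t : Bundle.Trivialization I π) (i : I) :
    IsSheet π t.baseSet (t.source ∩ t ⁻¹' (Prod.snd ⁻¹' {i})) where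
  isOpen := t.continuousOn_toFun.isOpen_inter_preimage t.open_source
    (continuous_snd.isOpen_preimage _ (isOpen_discrete _))
  isOpen_preimage_diff := by
    have hdiff : π ⁻¹' t.baseSet \ (t.source ∩ t ⁻¹' (Prod.snd ⁻¹' {i})) =
        t.source ∩ t ⁻¹' (Prod.snd ⁻¹' {i}ᶜ) := by
      rw [← t.source_eq]; ext; simp +contextual
    rw [hdiff]
    exact t.continuousOn_toFun.isOpen_inter_preimage t.open_source
      (continuous_snd.isOpen_preimage _ (isOpen_discrete _))
  subset_preimage := t.source_eq ▸ inter_subset_left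
  injOn z hz w hw hzw := t.injOn hz.1 hw.1 <|
    Prod.ext ((t.coe_fst hz.1).trans (hzw.trans (t.coe_fst hw.1).symm)) (hz.2.trans hw.2.symm)
  exists_mem_fiber z hz := by
    have hmem : (π z, i) ∈ t.target := t.mem_target.mpr hz
    refine ⟨t.toPartialEquiv.symm (π z, i), ⟨t.map_target hmem, ?_⟩, t.proj_symm_apply hmem⟩
    simp [t.apply_symm_apply hmem]

theorem IsEvenlyCovered.exists_isSheet {x : X} {I : Type*} [TopologicalSpace I]
    (h : IsEvenlyCovered π x I) : ∃ U V, x ∈ U ∧ IsOpen U ∧ IsSheet π U V := by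
  cases isEmpty_or_nonempty I with
  | inr _ =>
    have := h.1
    exact ⟨_, _, h.2.choose_spec.1, h.toTrivialization'.open_baseSet,
      h.toTrivialization'.isSheet (Classical.arbitrary I)⟩
  | inl _ =>
    obtain ⟨-, U, hxU, hU, hπU, H, -⟩ := h
    have hempty (z : E) (hz : z ∈ π ⁻¹' U) : False := isEmptyElim (H ⟨z, hz⟩).2
    exact ⟨U, ∅, hxU, hU, isOpen_empty, by simpa using hπU, empty_subset _, injOn_empty _,
      fun z hz ↦ (hempty z hz).elim⟩

namespace IsSheet

variable {U : Set X} {V : Set E}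

theorem isClosed_inter_preimage (hV : IsSheet π U V) (hπ : Continuous π) {C : Set X}
    (hC : IsClosed C) (hCU : C ⊆ U) : IsClosed (V ∩ π ⁻¹' C) := by
  have hcompl : (V ∩ π ⁻¹' C)ᶜ = (π ⁻¹' U \ V) ∪ (π ⁻¹' C)ᶜ := by
    ext z
    constructor
    · intro hz
      by_cases hzC : π z ∈ C
      · exact Or.inl ⟨hCU hzC, fun hzV ↦ hz ⟨hzV, hzC⟩⟩
      · exact Or.inr hzC
    · rintro (hz | hz) ⟨hzV, hzC⟩
      exacts [hz.2 hzV, hz hzC]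
  rw [← isOpen_compl_iff, hcompl]
  exact hV.isOpen_preimage_diff.union (hC.preimage hπ).isOpen_compl

theorem tsupport_indicator_subset (hV : IsSheet π U V) (hπ : Continuous π) {M : Type*} [Zero M]
    {f : X → M} (hf : tsupport f ⊆ U) : tsupport (V.indicator (f ∘ π)) ⊆ V := by
  refine (closure_minimal ?_ (hV.isClosed_inter_preimage hπ (isClosed_tsupport f) hf)).trans
    inter_subset_left
  rw [support_indicator, support_comp_eq_preimage]
  exact inter_subset_inter_right _ (preimage_mono (subset_tsupport f))

theorem continuous_indicator (hV : IsSheet π U V) (hπ : Continuous π) {M : Type*}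
    [TopologicalSpace M] [Zero M] {f : X → M} (hf : Continuous f) (hfU : tsupport f ⊆ U) :
    Continuous (V.indicator (f ∘ π)) :=
  ContinuousOn.continuous_of_tsupport_subset
    ((hf.comp hπ).continuousOn.congr fun _ hz ↦ indicator_of_mem hz _) hV.isOpen
    (hV.tsupport_indicator_subset hπ hfU)

end IsSheet

namespace IsCoveringMap

variable [PreconnectedSpace E] {g g' : E ≃ₜ E}

theorem homeomorph_eq_of_apply_eq (hπ : IsCoveringMap π) (hg : π ∘ g = π) (hg' : π ∘ g' = π)
    {z : E} (h : g z = g' z) : g = g' :=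
  Homeomorph.ext <| congrFun <|
    hπ.eq_of_comp_eq g.continuous g'.continuous (hg.trans hg'.symm) z h

theorem homeomorph_eq_of_apply_mem (hπ : IsCoveringMap π) {V : Set E} (hV : InjOn π V)
    (hg : π ∘ g = π) (hg' : π ∘ g' = π) {z : E} (hgz : g z ∈ V) (hg'z : g' z ∈ V) : g = g' :=
  hπ.homeomorph_eq_of_apply_eq hg hg' <|
    hV hgz hg'z ((congrFun hg z).trans (congrFun hg' z).symm)

end IsCoveringMap

theorem IsSheet.finsum_deck_indicator [PreconnectedSpace E] {U : Set X} {V : Set E}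
    (hV : IsSheet π U V) (hπ : IsCoveringMap π)
    (hreg : ∀ x y : E, π x = π y → ∃ g : E ≃ₜ E, (π ∘ ⇑g = π) ∧ g x = y)
    {M : Type*} [AddCommMonoid M] {f : X → M} (hf : support f ⊆ U) (z : E) :
    ∑ᶠ (g : E ≃ₜ E) (_ : π ∘ ⇑g = π), V.indicator (f ∘ π) (g z) = f (π z) := by
  classical
  by_cases hz : f (π z) = 0
  · rw [hz]
    refine finsum_eq_zero_of_forall_eq_zero fun g ↦ finsum_eq_if.trans <|
      ite_eq_right_iff.2 fun hg ↦ indicator_apply_eq_zero.2 fun _ ↦ ?_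
    rw [comp_apply, ← comp_apply (f := π), hg, hz]
  · obtain ⟨v, hv, hπv⟩ := hV.exists_mem_fiber z (hf hz)
    obtain ⟨g₀, hg₀, rfl⟩ := hreg z v hπv.symm
    rw [finsum_eq_single _ g₀ fun g hne ↦ finsum_eq_if.trans <| ite_eq_right_iff.2 fun hg ↦
      indicator_of_notMem (fun hgz ↦ hne (hπ.homeomorph_eq_of_apply_mem hV.injOn hg hg₀ hgz hv)) _,
      finsum_eq_if, if_pos hg₀, indicator_of_mem hv, comp_apply, hπv]

theorem IsCoveringMap.exists_fin_isSheet_cover [CompactSpace X] (hπ : IsCoveringMap π) :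
    ∃ (n : ℕ) (U : Fin n → Set X) (V : Fin n → Set E),
      (∀ k, IsOpen (U k)) ∧ (∀ k, IsSheet π (U k) (V k)) ∧ univ ⊆ ⋃ k, U k := by
  choose U V hxU hU hV using fun x ↦ (hπ x).exists_isSheet
  obtain ⟨t, ht⟩ := isCompact_univ.elim_finite_subcover U hU fun x _ ↦ mem_iUnion.2 ⟨x, hxU x⟩
  let c (k : Fin t.card) : X := t.equivFin.symm k
  refine ⟨t.card, U ∘ c, V ∘ c, fun k ↦ hU _, fun k ↦ hV _, fun y _ ↦ ?_⟩
  obtain ⟨x, hx, hy⟩ := mem_iUnion₂.1 (ht (mem_univ y))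
  exact mem_iUnion.2 ⟨t.equivFin ⟨x, hx⟩, by simpa [c] using hy⟩

theorem regular_covering_partition_of_unity_general
    {E X : Type} [TopologicalSpace E] [TopologicalSpace X]
    [ConnectedSpace E]
    [CompactSpace X] [T2Space X]
    (π : E → X) (hcov : IsCoveringMap π)
    (hreg : ∀ x y : E, π x = π y → ∃ g : E ≃ₜ E, (π ∘ ⇑g = π) ∧ g x = y) :
    ∃ (n : ℕ) (e : Fin n → C(E, ℝ)) (U : Fin n → Set E),
      (∀ ι, IsOpen (U ι)) ∧
      (∀ ι, Set.InjOn π (U ι)) ∧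
      (∀ ι, tsupport ⇑(e ι) ⊆ U ι) ∧
      (∀ ι, ∀ x : E, 0 ≤ e ι x) ∧
      (∀ x : E, (∑ ι, ∑ᶠ (g : E ≃ₜ E) (_ : π ∘ ⇑g = π), (e ι (g x)) ^ 2) = 1) ∧
      (∀ ι, ∀ g : E ≃ₜ E, π ∘ ⇑g = π → g ≠ Homeomorph.refl E →
        ∀ x : E, e ι x * e ι (g x) = 0) := by
  obtain ⟨n, U, V, hU, hV, hcover⟩ := hcov.exists_fin_isSheet_cover
  obtain ⟨ρ, hρ⟩ := PartitionOfUnity.exists_isSubordinate isClosed_univ U hU hcover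
  have hsqrt (k : Fin n) : tsupport (fun x ↦ √(ρ k x)) ⊆ U k :=
    (tsupport_comp_subset Real.sqrt_zero _).trans (hρ k)
  let e (k : Fin n) : C(E, ℝ) := ⟨(V k).indicator ((fun x ↦ √(ρ k x)) ∘ π),
    (hV k).continuous_indicator hcov.continuous (by fun_prop) (hsqrt k)⟩
  have he_sq (k : Fin n) (y : E) : e k y ^ 2 = (V k).indicator (ρ k ∘ π) y := by
    by_cases hy : y ∈ V k
    · simp [e, hy, Real.sq_sqrt (ρ.nonneg k _)]
    · simp [e, hy]
  refine ⟨n, e, V, fun k ↦ (hV k).isOpen, fun k ↦ (hV k).injOn,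
    fun k ↦ (hV k).tsupport_indicator_subset hcov.continuous (hsqrt k),
    fun k ↦ indicator_nonneg fun _ _ ↦ Real.sqrt_nonneg _, fun z ↦ ?_, fun k g hg hne z ↦ ?_⟩
  · calc ∑ k, ∑ᶠ (g : E ≃ₜ E) (_ : π ∘ ⇑g = π), e k (g z) ^ 2 = ∑ k, ρ k (π z) := by
          simp only [he_sq]
          exact Finset.sum_congr rfl fun k _ ↦ (hV k).finsum_deck_indicator hcov hreg
            (subset_tsupport _ |>.trans (hρ k)) z
      _ = 1 := by rw [← finsum_eq_sum_of_fintype]; exact ρ.sum_eq_one (mem_univ _)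
  · by_contra h
    obtain ⟨hz, hgz⟩ := mul_ne_zero_iff.1 h
    exact hne (hcov.homeomorph_eq_of_apply_mem (hV k).injOn hg rfl
      (mem_of_indicator_ne_zero hgz) (mem_of_indicator_ne_zero hz))

/-- Let `π : X̃ → X` be a surjective finite-fold covering map between compact
Hausdorff spaces with `X̃` connected, and suppose the covering is regular: the deck
transformations (homeomorphisms `g` with `π ∘ g = π`) act transitively on each fiber.
Then there exist a finite index set `Fin n`, nonnegative continuous functions
`e ι : X̃ → ℝ` and open sets `U ι ⊆ X̃` on which `π` is injective, with
`tsupport (e ι) ⊆ U ι`, such that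
`∑_{ι} ∑_{g deck} (e ι ∘ g)² = 1` on `X̃`, and `e ι * (e ι ∘ g) = 0` for every
nontrivial deck transformation `g`. -/
theorem regular_covering_partition_of_unity
    {E X : Type} [TopologicalSpace E] [TopologicalSpace X]
    [CompactSpace E] [T2Space E] [ConnectedSpace E]
    [CompactSpace X] [T2Space X]
    (π : E → X) (hcov : IsCoveringMap π) (hsurj : Function.Surjective π)
    (hfib : ∀ x : X, (π ⁻¹' {x}).Finite)
    (hreg : ∀ x y : E, π x = π y → ∃ g : E ≃ₜ E, (π ∘ ⇑g = π) ∧ g x = y) :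
    ∃ (n : ℕ) (e : Fin n → C(E, ℝ)) (U : Fin n → Set E),
      (∀ ι, IsOpen (U ι)) ∧
      (∀ ι, Set.InjOn π (U ι)) ∧
      (∀ ι, tsupport ⇑(e ι) ⊆ U ι) ∧
      (∀ ι, ∀ x : E, 0 ≤ e ι x) ∧
      (∀ x : E, (∑ ι, ∑ᶠ (g : E ≃ₜ E) (_ : π ∘ ⇑g = π), (e ι (g x)) ^ 2) = 1) ∧
      (∀ ι, ∀ g : E ≃ₜ E, π ∘ ⇑g = π → g ≠ Homeomorph.refl E →
        ∀ x : E, e ι x * e ι (g x) = 0) :=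
  regular_covering_partition_of_unity_general π hcov hreg
end

section
/- Let π : X̃ → X be a continuous map of topological spaces, let U ⊆ X be open, and let Ũ ⊆ π⁻¹(U) be a subset that is open in X̃, closed in the subspace π⁻¹(U), and mapped homeomorphically onto U by π. Let e : X → ℝ be a continuous function whose support is a compact subset of U. Then the function ẽ : X̃ → ℝ defined by ẽ(x̃) = e(π(x̃)) for x̃ ∈ Ũ and ẽ(x̃) = 0 for x̃ ∉ Ũ is continuous. -/
/-!
The indicator of an open set `V` applied to a continuous function is continuous as soon as the
function vanishes on the frontier of `V`. A frontier point of `V` over `tsupport e` lies in the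
open set `π⁻¹ U`, in which `V` is closed, so it would lie in `V` itself.
-/

open Set

theorem IsOpen.inter_closure_subset_of_isClosed_preimage_val {X : Type*} [TopologicalSpace X]
    {s t : Set X} (hs : IsOpen s) (hst : IsClosed (Subtype.val ⁻¹' t : Set s)) :
    s ∩ closure t ⊆ t :=
  fun _ hx => isClosed_preimage_val.mp hst ⟨hx.1, hs.inter_closure hx⟩

theorem IsOpen.continuous_indicator_of_isClosed_preimage_val {X M : Type*} [TopologicalSpace X]
    [TopologicalSpace M] [Zero M] {s t : Set X} {f : X → M} (hs : IsOpen s) (ht : IsOpen t)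
    (hst : IsClosed (Subtype.val ⁻¹' t : Set s)) (hf : Continuous f) (hsupp : tsupport f ⊆ s) :
    Continuous (t.indicator f) := by
  refine continuous_indicator (fun x hx => ?_) hf.continuousOn
  rw [ht.frontier_eq] at hx
  by_contra hfx
  exact hx.2 (hs.inter_closure_subset_of_isClosed_preimage_val hst
    ⟨hsupp (subset_tsupport f hfx), hx.1⟩)

theorem indicator_pullback_continuous_general
    {E X : Type} [TopologicalSpace E] [TopologicalSpace X]
    (π : E → X) (hπ : Continuous π)
    (U : Set X) (hU : IsOpen U)
    (V : Set E) (hVopen : IsOpen V)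
    (hVclosed : IsClosed {x : π ⁻¹' U | (x : E) ∈ V})
    (e : C(X, ℝ)) (hsupp : tsupport ⇑e ⊆ U) :
    Continuous (V.indicator fun x => e (π x)) :=
  (hU.preimage hπ).continuous_indicator_of_isClosed_preimage_val hVopen hVclosed
    (e.continuous.comp hπ) ((tsupport_comp_subset_preimage e hπ).trans (preimage_mono hsupp))

/-- Let `π : X̃ → X` be continuous, `U ⊆ X` open, and let `V ⊆ π⁻¹(U)` be a
subset that is open in `X̃`, closed in the subspace `π⁻¹(U)`, and mapped homeomorphically
onto `U` by `π`.  Let `e : X → ℝ` be continuous with compact support contained in `U`.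
Then the function `x̃ ↦ e (π x̃)` on `V`, extended by `0` outside `V` (i.e. the indicator
`V.indicator (e ∘ π)`), is continuous. -/
theorem indicator_pullback_continuous
    {E X : Type} [TopologicalSpace E] [TopologicalSpace X]
    (π : E → X) (hπ : Continuous π)
    (U : Set X) (hU : IsOpen U)
    (V : Set E) (hVsub : V ⊆ π ⁻¹' U) (hVopen : IsOpen V)
    (hVclosed : IsClosed {x : π ⁻¹' U | (x : E) ∈ V})
    (hmaps : Set.MapsTo π V U)
    (hhomeo : IsHomeomorph (Set.MapsTo.restrict π V U hmaps))
    (e : C(X, ℝ)) (hcomp : HasCompactSupport ⇑e) (hsupp : tsupport ⇑e ⊆ U) :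
    Continuous (V.indicator fun x => e (π x)) :=
  indicator_pullback_continuous_general π hπ U hU V hVopen hVclosed e hsupp
end

section
/- Let π : X̃ → X be a surjective finite-fold covering map between compact Hausdorff spaces with X̃ connected, and suppose the covering is regular, i.e. the group of deck transformations of π acts transitively on each fiber of π. Then C(X̃,ℂ), regarded as a module over C(X,ℂ) via the pullback *-homomorphism π* : C(X,ℂ) → C(X̃,ℂ), is a finitely generated projective C(X,ℂ)-module. -/
/-!
Over an evenly covered open set `U`, the sheets of `π` give local sections `s j`, and for
`α, β` supported in `U` the functions `u j = (α ∘ π) · 1_{sheet j}` and the `C(X)`-linear maps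
`w j f = β · (f ∘ s j)` satisfy `∑ j, (w j f ∘ π) · u j = (α β ∘ π) · f`. Taking `α = β = √ρ i`
for a partition of unity `ρ` subordinate to a finite cover by evenly covered sets and summing
over `i` gives finitely many `u k`, `w k` with `∑ k, (w k f ∘ π) · u k = f`. This exhibits
`C(E)` as a direct summand of the free module `C(X)^K` (dual basis lemma).
-/

theorem Module.finite_and_projective_of_sum_smul_eq {R M K : Type*} [CommRing R] [AddCommGroup M]
    [Module R M] [Fintype K] (u : K → M) (w : K → M →ₗ[R] R)
    (h : ∀ m, ∑ k, w k m • u k = m) :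
    Module.Finite R M ∧ Module.Projective R M := by
  let p : (K → R) →ₗ[R] M := ∑ k, (LinearMap.proj k).smulRight (u k)
  have hsplit : p ∘ₗ LinearMap.pi w = LinearMap.id := by
    ext m
    simp [p, h m]
  exact ⟨.of_surjective p fun m => ⟨LinearMap.pi w m, congr($hsplit m)⟩, .of_split _ p hsplit⟩

namespace RingHom

variable {R S : Type*} [CommRing R] [CommRing S]

def IsFrame {K : Type*} [Fintype K] (φ : R →+* S) (c : R) (u : K → S) (w : K → S →+ R) :
    Prop :=
  (∀ k a s, w k (φ a * s) = a * w k s) ∧ ∀ s, ∑ k, φ (w k s) * u k = φ c * s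

theorem IsFrame.sigma {ι : Type*} [Fintype ι] {K : ι → Type*} [∀ i, Fintype (K i)]
    {φ : R →+* S} {c : ι → R} {u : ∀ i, K i → S} {w : ∀ i, K i → S →+ R}
    (h : ∀ i, φ.IsFrame (c i) (u i) (w i)) :
    φ.IsFrame (∑ i, c i) (fun k : Σ i, K i => u k.1 k.2) (fun k => w k.1 k.2) := by
  refine ⟨fun k => (h k.1).1 k.2, fun s => ?_⟩
  rw [Fintype.sum_sigma, map_sum, Finset.sum_mul]
  exact Finset.sum_congr rfl fun i _ => (h i).2 s

theorem IsFrame.finite_and_projective {K : Type*} [Fintype K] {φ : R →+* S} {u : K → S}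
    {w : K → S →+ R} (h : φ.IsFrame 1 u w) :
    @Module.Finite R S _ _ (Module.compHom S φ) ∧
      @Module.Projective R _ S _ (Module.compHom S φ) := by
  let := Module.compHom S φ
  refine Module.finite_and_projective_of_sum_smul_eq u
    (fun k => { toFun := w k, map_add' := map_add _, map_smul' := h.1 k }) fun s => ?_
  exact (h.2 s).trans (by rw [map_one, one_mul])

end RingHom

theorem continuous_indicator_mul_of_tsupport_subset {α M : Type*} [TopologicalSpace α]
    [TopologicalSpace M] [MulZeroClass M] [ContinuousMul M] {U : Set α} (hU : IsOpen U)
    {c g : α → M} (hc : ContinuousOn c U) (hcU : tsupport c ⊆ U) (hg : ContinuousOn g U) :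
    Continuous (U.indicator (c * g)) := by
  refine ContinuousOn.continuous_of_tsupport_subset ?_ hU ?_
  · exact (hc.mul hg).congr fun x hx => Set.indicator_of_mem hx _
  · refine (closure_mono fun x hx => ?_).trans hcU
    contrapose! hx
    simp [Function.notMem_support.mp hx]

universe u v

variable {E : Type u} {X : Type v} {F : Type*}
  [TopologicalSpace E] [TopologicalSpace X] [TopologicalSpace F]

theorem Bundle.Trivialization.exists_isFrame [DiscreteTopology F] [Fintype F] {π : C(E, X)}
    (T : Bundle.Trivialization F π) {α β : C(X, ℂ)} (hα : tsupport α ⊆ T.baseSet)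
    (hβ : tsupport β ⊆ T.baseSet) :
    ∃ (u : F → C(E, ℂ)) (w : F → C(E, ℂ) →+ C(X, ℂ)),
      (ContinuousMap.compRightAlgHom ℂ ℂ π).toRingHom.IsFrame (α * β) u w := by
  classical
  have hsheet (j : F) : ContinuousOn (fun e => if (T e).2 = j then (1 : ℂ) else 0) T.source :=
    ((continuous_of_discreteTopology (f := fun i : F => if i = j then (1 : ℂ) else 0)).comp
      continuous_snd).comp_continuousOn T.continuousOn_toFun
  have hsection (j : F) :
      ContinuousOn (fun x => T.toOpenPartialHomeomorph.symm (x, j)) T.baseSet :=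
    T.continuousOn_invFun.comp (by fun_prop) fun x hx => T.mem_target.mpr hx
  have hαπ : tsupport (α ∘ π) ⊆ T.source := T.source_eq ▸
    (tsupport_comp_subset_preimage α π.continuous).trans (Set.preimage_mono hα)
  let u (j : F) : C(E, ℂ) :=
    ⟨T.source.indicator ((α ∘ π) * fun e => if (T e).2 = j then 1 else 0),
      continuous_indicator_mul_of_tsupport_subset T.open_source (by fun_prop) hαπ (hsheet j)⟩
  let w (j : F) : C(E, ℂ) →+ C(X, ℂ) := AddMonoidHom.mk'
    (fun f => ⟨T.baseSet.indicator (β * fun x => f (T.toOpenPartialHomeomorph.symm (x, j))),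
      continuous_indicator_mul_of_tsupport_subset T.open_baseSet (by fun_prop) hβ
        (f.continuous.comp_continuousOn (hsection j))⟩)
    fun f g => by ext x; by_cases hx : x ∈ T.baseSet <;> simp [hx, mul_add]
  refine ⟨u, w, fun j a f => ?_, fun f => ?_⟩
  · ext x
    by_cases hx : x ∈ T.baseSet
    · simp [w, hx, T.proj_symm_apply' hx, mul_left_comm]
    · simp [w, hx]
  · ext e
    by_cases he : e ∈ T.source
    · have hbase : π e ∈ T.baseSet := T.mem_source.mp he
      simp [u, w, he, hbase, T.symm_apply_mk_proj he, mul_comm, mul_left_comm]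
    · have hzero : α (π e) = 0 :=
        image_eq_zero_of_notMem_tsupport fun h => he (T.mem_source.mpr (hα h))
      simp [u, he, hzero]

theorem IsCoveringMap.exists_isFrame_one [CompactSpace X] [T2Space X] {π : C(E, X)}
    (hcov : IsCoveringMap π) (hsurj : Function.Surjective π) (hfib : ∀ x, (π ⁻¹' {x}).Finite) :
    ∃ (K : Type (max u v)) (_ : Fintype K) (u : K → C(E, ℂ)) (w : K → C(E, ℂ) →+ C(X, ℂ)),
      (ContinuousMap.compRightAlgHom ℂ ℂ π).toRingHom.IsFrame 1 u w := by
  have (x : X) : Nonempty (π ⁻¹' {x}) := (hsurj x).elim fun e he => ⟨⟨e, he⟩⟩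
  have (x : X) : Fintype (π ⁻¹' {x}) := (hfib x).fintype
  have (x : X) : DiscreteTopology (π ⁻¹' {x}) := (hcov x).1
  let T (x : X) := (hcov x).toTrivialization
  obtain ⟨s, hs⟩ := isCompact_univ.elim_finite_subcover (fun x => (T x).baseSet)
    (fun x => (T x).open_baseSet) fun x _ =>
      Set.mem_iUnion.mpr ⟨x, (hcov x).mem_toTrivialization_baseSet⟩
  obtain ⟨ρ, hρ⟩ := PartitionOfUnity.exists_isSubordinate isClosed_univ
    (fun i : s => (T i).baseSet) (fun i => (T i).open_baseSet) fun x _ => by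
      obtain ⟨i, hi, hx⟩ := Set.mem_iUnion₂.mp (hs trivial)
      exact Set.mem_iUnion.mpr ⟨⟨i, hi⟩, hx⟩
  let σ (i : s) : C(X, ℂ) := ⟨fun x => (√(ρ i x) : ℂ), by fun_prop⟩
  have hσ (i : s) : tsupport (σ i) ⊆ (T i).baseSet :=
    (tsupport_comp_subset (g := fun t : ℝ => (√t : ℂ)) (by simp) (ρ i)).trans (hρ i)
  have hσσ : ∑ i, σ i * σ i = 1 := by
    ext x
    simp only [σ, ContinuousMap.sum_apply, ContinuousMap.mul_apply, ContinuousMap.coe_mk,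
      ContinuousMap.one_apply, ← Complex.ofReal_mul, Real.mul_self_sqrt (ρ.nonneg _ x),
      ← Complex.ofReal_sum]
    rw [← finsum_eq_sum_of_fintype, ρ.sum_eq_one (Set.mem_univ x), Complex.ofReal_one]
  choose u w hw using fun i : s => (T i).exists_isFrame (hσ i) (hσ i)
  exact ⟨_, inferInstance, _, _, hσσ ▸ RingHom.IsFrame.sigma hw⟩

theorem regular_covering_gives_fg_projective_module_general
    {E X : Type} [TopologicalSpace E] [TopologicalSpace X]
    [CompactSpace X] [T2Space X]
    (π : C(E, X)) (hcov : IsCoveringMap π) (hsurj : Function.Surjective π)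
    (hfib : ∀ x : X, (π ⁻¹' {x}).Finite)
    (φ : C(X, ℂ) →+* C(E, ℂ)) (hφ : ∀ f : C(X, ℂ), φ f = f.comp π) :
    @Module.Finite C(X, ℂ) C(E, ℂ) _ _ (Module.compHom C(E, ℂ) φ) ∧
      @Module.Projective C(X, ℂ) _ C(E, ℂ) _ (Module.compHom C(E, ℂ) φ) := by
  obtain ⟨K, _, u, w, hframe⟩ := hcov.exists_isFrame_one hsurj hfib
  obtain rfl : φ = (ContinuousMap.compRightAlgHom ℂ ℂ π).toRingHom := RingHom.ext hφ
  exact hframe.finite_and_projective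

/-- Let `π : X̃ → X` be a surjective finite-fold covering map between compact
Hausdorff spaces with `X̃` connected, and suppose the covering is regular (the deck
transformations act transitively on each fiber).  Then `C(X̃, ℂ)`, regarded as a module over
`C(X, ℂ)` via the pullback ring homomorphism `φ : C(X, ℂ) →+* C(X̃, ℂ)`, `f ↦ f ∘ π`, is a
finitely generated projective `C(X, ℂ)`-module. -/
theorem regular_covering_gives_fg_projective_module
    {E X : Type} [TopologicalSpace E] [TopologicalSpace X]
    [CompactSpace E] [T2Space E] [ConnectedSpace E]
    [CompactSpace X] [T2Space X]
    (π : C(E, X)) (hcov : IsCoveringMap π) (hsurj : Function.Surjective π)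
    (hfib : ∀ x : X, (π ⁻¹' {x}).Finite)
    (hreg : ∀ x y : E, π x = π y → ∃ g : E ≃ₜ E, (⇑π ∘ ⇑g = ⇑π) ∧ g x = y)
    (φ : C(X, ℂ) →+* C(E, ℂ)) (hφ : ∀ f : C(X, ℂ), φ f = f.comp π) :
    @Module.Finite C(X, ℂ) C(E, ℂ) _ _ (Module.compHom C(E, ℂ) φ) ∧
      @Module.Projective C(X, ℂ) _ C(E, ℂ) _ (Module.compHom C(E, ℂ) φ) :=
  regular_covering_gives_fg_projective_module_general π hcov hsurj hfib φ hφ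
end

section
/- Let p, q be natural numbers and let b : ℝ^p × ℝ^q → ℝ be a continuous function vanishing at infinity with 0 ≤ b(x,y) ≤ 1 for all (x,y). Then there exist a continuous function b' : ℝ^q → ℝ vanishing at infinity with 0 ≤ b' ≤ 1 and a continuous function b'' : ℝ^p × ℝ^q → ℝ vanishing at infinity with 0 ≤ b'' ≤ 1 such that b(x,y) = b'(y) · b''(x,y) for all (x,y) ∈ ℝ^p × ℝ^q. -/
/-!
Take `g y := ⨆ x, b (x, y)`, the supremum of `b` over the fibre above `y`. Since `b` is small
outside a compact set `K`, `g` is uniformly close to the supremum over the compact set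
`Prod.fst '' K`, which is continuous; and `g` is small outside `Prod.snd '' K`. So `g ∈ C₀`,
`0 ≤ b ≤ g ∘ snd ≤ 1`, and one can split `b = √g · (b / √g)`, where the second factor is
bounded by `√b` and hence continuous (also where `g` vanishes) and vanishing at infinity.
-/

open Filter Set Topology ZeroAtInfty

namespace Real

theorem div_sqrt_le_sqrt_of_le {a c : ℝ} (ha : 0 ≤ a) (hac : a ≤ c) : a / √c ≤ √a := by
  rcases ha.eq_or_lt with rfl | ha
  · simp
  calc a / √c ≤ a / √a := div_le_div_of_nonneg_left ha.le (sqrt_pos.2 ha) (sqrt_le_sqrt hac)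
    _ = √a := div_sqrt

theorem sqrt_mul_div_sqrt_of_le {a c : ℝ} (ha : 0 ≤ a) (hac : a ≤ c) : √c * (a / √c) = a := by
  rcases (ha.trans hac).eq_or_lt with hc | hc
  · simp [← hc, le_antisymm (hac.trans hc.ge) ha]
  · exact mul_div_cancel₀ a (sqrt_pos.2 hc).ne'

end Real

section DivSqrt

variable {Z : Type*} [TopologicalSpace Z]

theorem ZeroAtInftyContinuousMap.tendsto_sqrt_cocompact (f : C₀(Z, ℝ)) :
    Tendsto (fun z => √(f z)) (cocompact Z) (𝓝 0) :=
  (Real.continuous_sqrt.tendsto' 0 0 Real.sqrt_zero).comp (zero_at_infty f)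

/-- Where `h` vanishes, so does `f`, and the quotient is squeezed to `0` by `√f`. -/
theorem continuous_div_sqrt_of_le {f h : Z → ℝ} (hf : Continuous f) (hh : Continuous h)
    (hf0 : ∀ z, 0 ≤ f z) (hfh : ∀ z, f z ≤ h z) : Continuous fun z => f z / √(h z) := by
  refine continuous_iff_continuousAt.2 fun z => ?_
  by_cases hz : h z = 0
  · have hfz : f z = 0 := le_antisymm (hz ▸ hfh z) (hf0 z)
    have hsqrt : Tendsto (fun w => √(f w)) (𝓝 z) (𝓝 0) := by
      simpa [hfz, Function.comp_def] using (Real.continuous_sqrt.tendsto _).comp (hf.tendsto z)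
    rw [ContinuousAt, hfz, zero_div]
    exact squeeze_zero (fun w => div_nonneg (hf0 w) (Real.sqrt_nonneg _))
      (fun w => Real.div_sqrt_le_sqrt_of_le (hf0 w) (hfh w)) hsqrt
  · have hpos : 0 < h z := lt_of_le_of_ne ((hf0 z).trans (hfh z)) (Ne.symm hz)
    exact hf.continuousAt.div (Real.continuous_sqrt.comp hh).continuousAt
      (Real.sqrt_pos.2 hpos).ne'

end DivSqrt

section FiberSup

variable {X Y : Type*}

/-- Junk value `0` if the fibre is unbounded above; it is bounded for `f ∈ C₀`. -/
noncomputable def fiberSup (f : X × Y → ℝ) (y : Y) : ℝ := ⨆ x, f (x, y)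

theorem fiberSup_nonneg {f : X × Y → ℝ} (hf : ∀ z, 0 ≤ f z) (y : Y) : 0 ≤ fiberSup f y :=
  Real.iSup_nonneg fun x => hf (x, y)

theorem fiberSup_le {f : X × Y → ℝ} {c : ℝ} {y : Y} (hc : 0 ≤ c) (hfc : ∀ x, f (x, y) ≤ c) :
    fiberSup f y ≤ c :=
  Real.iSup_le hfc hc

variable [TopologicalSpace X] [TopologicalSpace Y]

theorem ZeroAtInftyContinuousMap.exists_isCompact_lt_off (f : C₀(X, ℝ)) {ε : ℝ} (hε : 0 < ε) :
    ∃ K : Set X, IsCompact K ∧ ∀ x ∉ K, f x < ε := by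
  obtain ⟨K, hK, hsub⟩ := mem_cocompact.1 ((zero_at_infty f).eventually (gt_mem_nhds hε))
  exact ⟨K, hK, fun x hx => hsub hx⟩

theorem bddAbove_range_fiber (f : C₀(X × Y, ℝ)) (y : Y) : BddAbove (range fun x => f (x, y)) :=
  f.isBounded_range.bddAbove.mono (range_comp_subset_range _ f)

theorem le_fiberSup (f : C₀(X × Y, ℝ)) (z : X × Y) : f z ≤ fiberSup f z.2 :=
  le_ciSup (bddAbove_range_fiber f z.2) z.1

theorem sSup_image_fiber_le_fiberSup {f : C₀(X × Y, ℝ)} (hf : ∀ z, 0 ≤ f z) (s : Set X) (y : Y) :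
    sSup ((fun x => f (x, y)) '' s) ≤ fiberSup f y :=
  Real.sSup_le (by rintro _ ⟨x, -, rfl⟩; exact le_fiberSup f (x, y)) (fiberSup_nonneg hf y)

theorem fiberSup_le_sSup_image_add {f : C₀(X × Y, ℝ)} (hf : ∀ z, 0 ≤ f z) {K : Set (X × Y)}
    (hK : IsCompact K) {ε : ℝ} (hε : 0 ≤ ε) (hfK : ∀ z ∉ K, f z < ε) (y : Y) :
    fiberSup f y ≤ sSup ((fun x => f (x, y)) '' (Prod.fst '' K)) + ε := by
  have hbdd : BddAbove ((fun x => f (x, y)) '' (Prod.fst '' K)) :=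
    (hK.image continuous_fst).bddAbove_image
      (f.continuous.comp (Continuous.prodMk_left y)).continuousOn
  have hnonneg : 0 ≤ sSup ((fun x => f (x, y)) '' (Prod.fst '' K)) :=
    Real.sSup_nonneg (by rintro _ ⟨x, -, rfl⟩; exact hf _)
  refine fiberSup_le (add_nonneg hnonneg hε) fun x => ?_
  by_cases hxy : (x, y) ∈ K
  · have := le_csSup hbdd (mem_image_of_mem _ (mem_image_of_mem Prod.fst hxy))
    linarith
  · linarith [hfK _ hxy]

theorem continuous_fiberSup {f : C₀(X × Y, ℝ)} (hf : ∀ z, 0 ≤ f z) : Continuous (fiberSup f) := by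
  refine continuous_of_uniform_approx_of_continuous fun u hu => ?_
  obtain ⟨ε, hε, hεu⟩ := Metric.mem_uniformity_dist.1 hu
  obtain ⟨K, hK, hfK⟩ := f.exists_isCompact_lt_off (half_pos hε)
  refine ⟨fun y => sSup ((fun x => f (x, y)) '' (Prod.fst '' K)),
    (hK.image continuous_fst).continuous_sSup (f.continuous.comp continuous_swap), fun y => hεu ?_⟩
  have hlo := sSup_image_fiber_le_fiberSup hf (Prod.fst '' K) y
  have hhi := fiberSup_le_sSup_image_add hf hK (half_pos hε).le hfK y
  rw [Real.dist_eq, abs_lt]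
  constructor <;> linarith

theorem tendsto_fiberSup_cocompact {f : C₀(X × Y, ℝ)} (hf : ∀ z, 0 ≤ f z) :
    Tendsto (fiberSup f) (cocompact Y) (𝓝 0) := by
  refine tendsto_order.2 ⟨fun a ha => .of_forall fun y => ha.trans_le (fiberSup_nonneg hf y),
    fun a ha => ?_⟩
  obtain ⟨K, hK, hfK⟩ := f.exists_isCompact_lt_off (half_pos ha)
  refine mem_cocompact.2 ⟨Prod.snd '' K, hK.image continuous_snd, fun y hy => ?_⟩
  have hfy : fiberSup f y ≤ a / 2 :=
    fiberSup_le (half_pos ha).le fun x => (hfK _ fun hxy => hy ⟨_, hxy, rfl⟩).le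
  exact hfy.trans_lt (half_lt_self ha)

end FiberSup

/-- Let `b : ℝᵖ × ℝᵠ → ℝ` be a continuous function vanishing at infinity
with `0 ≤ b ≤ 1`.  Then there exist continuous functions `b' : ℝᵠ → ℝ` and
`b'' : ℝᵖ × ℝᵠ → ℝ`, both vanishing at infinity and with values in `[0,1]`, such that
`b (x, y) = b' y * b'' (x, y)` for all `(x, y)`. -/
theorem c0_factorization_through_transversal
    (p q : ℕ) (b : C₀((Fin p → ℝ) × (Fin q → ℝ), ℝ))
    (hb : ∀ z : (Fin p → ℝ) × (Fin q → ℝ), 0 ≤ b z ∧ b z ≤ 1) :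
    ∃ (b' : C₀((Fin q → ℝ), ℝ)) (b'' : C₀((Fin p → ℝ) × (Fin q → ℝ), ℝ)),
      (∀ y : Fin q → ℝ, 0 ≤ b' y ∧ b' y ≤ 1) ∧
      (∀ z : (Fin p → ℝ) × (Fin q → ℝ), 0 ≤ b'' z ∧ b'' z ≤ 1) ∧
      ∀ z : (Fin p → ℝ) × (Fin q → ℝ), b z = b' z.2 * b'' z := by
  have hb0 : ∀ z, 0 ≤ b z := fun z => (hb z).1
  let g : C₀(Fin q → ℝ, ℝ) :=
    ⟨⟨fiberSup b, continuous_fiberSup hb0⟩, tendsto_fiberSup_cocompact hb0⟩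
  have hbg : ∀ z, b z ≤ g z.2 := le_fiberSup b
  let b' : C₀(Fin q → ℝ, ℝ) :=
    ⟨⟨fun y => √(g y), Real.continuous_sqrt.comp g.continuous⟩, g.tendsto_sqrt_cocompact⟩
  let b'' : C₀((Fin p → ℝ) × (Fin q → ℝ), ℝ) :=
    ⟨⟨fun z => b z / √(g z.2),
      continuous_div_sqrt_of_le b.continuous (g.continuous.comp continuous_snd) hb0 hbg⟩,
      squeeze_zero (fun z => div_nonneg (hb0 z) (Real.sqrt_nonneg _))
        (fun z => Real.div_sqrt_le_sqrt_of_le (hb0 z) (hbg z)) b.tendsto_sqrt_cocompact⟩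
  refine ⟨b', b'', fun y => ⟨Real.sqrt_nonneg _, ?_⟩, fun z => ⟨?_, ?_⟩, fun z => ?_⟩
  · exact Real.sqrt_le_one.2 (fiberSup_le zero_le_one fun x => (hb (x, y)).2)
  · exact div_nonneg (hb0 z) (Real.sqrt_nonneg _)
  · exact (Real.div_sqrt_le_sqrt_of_le (hb0 z) (hbg z)).trans (Real.sqrt_le_one.2 (hb z).2)
  · exact (Real.sqrt_mul_div_sqrt_of_le (hb0 z) (hbg z)).symm
end
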